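/- For 0 ≤ L, (z₁z₂;q)_L / ((z₁;q)_L (z₂;q)_L) = ∑_{j=0}^{L} [L choose j]_q · z₁^j / ((z₁ q^{L-j};q)_j (z₂ q^j;q)_{L-j}), where [L choose j]_q is the Gaussian binomial coefficient. -/
import Mathlib


/-- `(z;q)_n = ∏_{j=0}^{n-1} (1 - z qʲ)`. -/
noncomputable def qPoch (z q : ℂ) (n : ℕ) : ℂ := ∏ j ∈ Finset.range n, (1 - z * q ^ j)

/-- The Gaussian binomial coefficient `[L choose j]_q = (q;q)_L / ((q;q)_j (q;q)_{L-j})`. -/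
noncomputable def gaussBinom (L j : ℕ) (q : ℂ) : ℂ :=
  qPoch q q L / (qPoch q q j * qPoch q q (L - j))

lemma qPoch_zero (z q : ℂ) : qPoch z q 0 = 1 := by simp [qPoch]

lemma qPoch_succ (z q : ℂ) (n : ℕ) : qPoch z q (n+1) = qPoch z q n * (1 - z * q ^ n) := by
  simp [qPoch, Finset.prod_range_succ]

lemma qPoch_add (z q : ℂ) (a b : ℕ) :
    qPoch z q (a + b) = qPoch z q a * qPoch (z * q ^ a) q b := by
  unfold qPoch
  rw [Finset.prod_range_add]
  congr 1
  refine Finset.prod_congr rfl fun i _ => ?_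
  rw [pow_add]; ring

lemma qPoch_ne_of_le {z q : ℂ} {m n : ℕ} (h : m ≤ n) (hn : qPoch z q n ≠ 0) :
    qPoch z q m ≠ 0 := by
  have : qPoch z q n = qPoch z q m * qPoch (z * q ^ m) q (n - m) := by
    rw [← qPoch_add]; congr 1; omega
  rw [this] at hn
  exact left_ne_zero_of_mul hn

lemma pascal (q : ℂ) (L i : ℕ) (hi : i < L) (hQ : ∀ k ≤ L + 1, qPoch q q k ≠ 0) :
    gaussBinom (L+1) (i+1) q = gaussBinom L (i+1) q + q ^ (L - i) * gaussBinom L i q := by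
  have h1 : qPoch q q (i+1) = qPoch q q i * (1 - q * q ^ i) := qPoch_succ q q i
  have h2 : qPoch q q (L - i) = qPoch q q (L - i - 1) * (1 - q * q ^ (L - i - 1)) := by
    rw [← qPoch_succ]; congr 1; omega
  have h3 : qPoch q q (L+1) = qPoch q q L * (1 - q * q ^ L) := qPoch_succ q q L
  have e4 : L + 1 - (i + 1) = L - i := by omega
  have e5 : L - (i + 1) = L - i - 1 := by omega
  have hp : q ^ (L - i) = q * q ^ (L - i - 1) := by
    rw [← pow_succ']; congr 1; omega
  have hp2 : q ^ (L - i) * q ^ i = q ^ L := by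
    rw [← pow_add]; congr 1; omega
  have n1 : qPoch q q i ≠ 0 := hQ i (by omega)
  have n2 : qPoch q q (L - i - 1) ≠ 0 := hQ _ (by omega)
  have n3 : (1 - q * q ^ i) ≠ 0 := by
    intro h; apply hQ (i+1) (by omega); rw [h1, h]; ring
  have n4 : (1 - q * q ^ (L - i - 1)) ≠ 0 := by
    intro h; apply hQ (L - i) (by omega); rw [h2, h]; ring
  have n5 : qPoch q q L ≠ 0 := hQ L (by omega)
  have hL : q ^ L = q * q ^ (L - i - 1) * q ^ i := by
    rw [mul_assoc, ← pow_add, ← pow_succ']; congr 1; omega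
  unfold gaussBinom
  rw [e4, e5, h1, h2, h3, hp, hL]
  field_simp
  ring

lemma gaussBinom_zero' (L : ℕ) (q : ℂ) (h : qPoch q q L ≠ 0) : gaussBinom L 0 q = 1 := by
  unfold gaussBinom
  rw [qPoch_zero, Nat.sub_zero, one_mul, div_self h]

lemma gaussBinom_self (L : ℕ) (q : ℂ) (h : qPoch q q L ≠ 0) : gaussBinom L L q = 1 := by
  unfold gaussBinom
  rw [Nat.sub_self, qPoch_zero, mul_one, div_self h]

lemma key (q z₁ z₂ : ℂ) : ∀ L : ℕ, qPoch q q L ≠ 0 →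
    qPoch (z₁ * z₂) q L = ∑ j ∈ Finset.range (L + 1),
      gaussBinom L j q * z₁ ^ j * qPoch z₂ q j * qPoch z₁ q (L - j) := by
  intro L
  induction L with
  | zero =>
    intro _
    simp [qPoch_zero, gaussBinom]
  | succ L ih =>
    intro hq
    have hQ : ∀ k ≤ L + 1, qPoch q q k ≠ 0 := fun k hk => qPoch_ne_of_le hk hq
    have hqL : qPoch q q L ≠ 0 := hQ L (Nat.le_succ L)
    set A : ℕ → ℂ := fun j => gaussBinom L j q * z₁ ^ j * qPoch z₂ q j * qPoch z₁ q (L - j)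
      with hA
    set f : ℕ → ℂ := fun j =>
      gaussBinom (L+1) j q * z₁ ^ j * qPoch z₂ q j * qPoch z₁ q (L + 1 - j) with hf
    have step1 : ∑ j ∈ Finset.range (L + 2), f j
        = (f 0 + ∑ j ∈ Finset.range L, f (j+1)) + f (L+1) := by
      rw [Finset.sum_range_succ, Finset.sum_range_succ']
      ring
    have pasc : ∀ j ∈ Finset.range L, f (j+1) =
        gaussBinom L (j+1) q * z₁ ^ (j+1) * qPoch z₂ q (j+1) * qPoch z₁ q (L - j)
        + q ^ (L - j) * gaussBinom L j q * z₁ ^ (j+1) * qPoch z₂ q (j+1) * qPoch z₁ q (L - j) := by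
      intro j hj
      rw [Finset.mem_range] at hj
      have := pascal q L j hj hQ
      simp only [hf]
      have e : L + 1 - (j + 1) = L - j := by omega
      rw [e, this]
      ring
    have step2 : ∑ j ∈ Finset.range L, f (j+1)
        = (∑ j ∈ Finset.range L,
            gaussBinom L (j+1) q * z₁ ^ (j+1) * qPoch z₂ q (j+1) * qPoch z₁ q (L - j))
        + ∑ j ∈ Finset.range L,
            q ^ (L - j) * gaussBinom L j q * z₁ ^ (j+1) * qPoch z₂ q (j+1) * qPoch z₁ q (L - j) := by
      rw [← Finset.sum_add_distrib]
      exact Finset.sum_congr rfl pasc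
    -- B' j = gaussBinom L j q * z₁^j * P₂ j * P₁ (L+1-j), summed over range (L+1)
    have stepB : f 0 + ∑ j ∈ Finset.range L,
          gaussBinom L (j+1) q * z₁ ^ (j+1) * qPoch z₂ q (j+1) * qPoch z₁ q (L - j)
        = ∑ j ∈ Finset.range (L+1),
            gaussBinom L j q * z₁ ^ j * qPoch z₂ q j * qPoch z₁ q (L + 1 - j) := by
      rw [Finset.sum_range_succ' (fun j =>
        gaussBinom L j q * z₁ ^ j * qPoch z₂ q j * qPoch z₁ q (L + 1 - j)) L]
      have h0 : f 0 = gaussBinom L 0 q * z₁ ^ 0 * qPoch z₂ q 0 * qPoch z₁ q (L + 1 - 0) := by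
        simp only [hf]
        rw [gaussBinom_zero' (L+1) q hq, gaussBinom_zero' L q hqL]
      rw [h0]
      have : ∀ j ∈ Finset.range L,
          gaussBinom L (j+1) q * z₁ ^ (j+1) * qPoch z₂ q (j+1) * qPoch z₁ q (L + 1 - (j+1))
          = gaussBinom L (j+1) q * z₁ ^ (j+1) * qPoch z₂ q (j+1) * qPoch z₁ q (L - j) := by
        intro j _
        congr 2
        omega
      rw [Finset.sum_congr rfl this]
      ring
    -- C' j = q^(L-j) * gaussBinom L j q * z₁^(j+1) * P₂(j+1) * P₁(L-j), summed over range (L+1)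
    have stepC : (∑ j ∈ Finset.range L,
          q ^ (L - j) * gaussBinom L j q * z₁ ^ (j+1) * qPoch z₂ q (j+1) * qPoch z₁ q (L - j))
        + f (L+1)
        = ∑ j ∈ Finset.range (L+1),
            q ^ (L - j) * gaussBinom L j q * z₁ ^ (j+1) * qPoch z₂ q (j+1) * qPoch z₁ q (L - j) := by
      rw [Finset.sum_range_succ]
      congr 1
      simp only [hf, Nat.sub_self, Nat.add_sub_cancel, qPoch_zero, pow_zero]
      rw [gaussBinom_self (L+1) q hq, gaussBinom_self L q hqL]
      ring
    have combine : ∀ j ∈ Finset.range (L+1),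
        gaussBinom L j q * z₁ ^ j * qPoch z₂ q j * qPoch z₁ q (L + 1 - j)
        + q ^ (L - j) * gaussBinom L j q * z₁ ^ (j+1) * qPoch z₂ q (j+1) * qPoch z₁ q (L - j)
        = A j * (1 - z₁ * z₂ * q ^ L) := by
      intro j hj
      rw [Finset.mem_range] at hj
      have e1 : L + 1 - j = (L - j) + 1 := by omega
      rw [e1, qPoch_succ, qPoch_succ]
      have e2 : q ^ (L - j) * q ^ j = q ^ L := by rw [← pow_add]; congr 1; omega
      simp only [hA]
      rw [← e2]
      ring
    calc qPoch (z₁ * z₂) q (L + 1)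
        = qPoch (z₁ * z₂) q L * (1 - z₁ * z₂ * q ^ L) := by
          rw [qPoch_succ]
      _ = ∑ j ∈ Finset.range (L+1), A j * (1 - z₁ * z₂ * q ^ L) := by
          rw [← Finset.sum_mul, ← ih hqL]
      _ = ∑ j ∈ Finset.range (L+1),
            (gaussBinom L j q * z₁ ^ j * qPoch z₂ q j * qPoch z₁ q (L + 1 - j)
            + q ^ (L - j) * gaussBinom L j q * z₁ ^ (j+1) * qPoch z₂ q (j+1) * qPoch z₁ q (L - j)) :=
          (Finset.sum_congr rfl combine).symm
      _ = ∑ j ∈ Finset.range (L + 2), f j := by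
          rw [Finset.sum_add_distrib, ← stepB, ← stepC, step1, step2]
          ring

/-- Finite analogue of the `q`-binomial nonnegativity identity:
`(z₁z₂;q)_L / ((z₁;q)_L (z₂;q)_L)
 = ∑_{j=0}^{L} [L choose j]_q z₁ʲ / ((z₁q^{L-j};q)_j (z₂qʲ;q)_{L-j})`,
valid whenever the denominators are nonzero. -/
theorem finite_q_binomial_identity (L : ℕ) (z₁ z₂ q : ℂ)
    (h₁ : qPoch z₁ q L ≠ 0) (h₂ : qPoch z₂ q L ≠ 0) (hq : qPoch q q L ≠ 0) :
    qPoch (z₁ * z₂) q L / (qPoch z₁ q L * qPoch z₂ q L) =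
      ∑ j ∈ Finset.range (L + 1),
        gaussBinom L j q * z₁ ^ j /
          (qPoch (z₁ * q ^ (L - j)) q j * qPoch (z₂ * q ^ j) q (L - j)) := by
  rw [key q z₁ z₂ L hq, Finset.sum_div]
  refine Finset.sum_congr rfl fun j hj => ?_
  rw [Finset.mem_range] at hj
  have hjL : j ≤ L := by omega
  have split1 : qPoch z₁ q L = qPoch z₁ q (L - j) * qPoch (z₁ * q ^ (L - j)) q j := by
    rw [← qPoch_add]; congr 1; omega
  have split2 : qPoch z₂ q L = qPoch z₂ q j * qPoch (z₂ * q ^ j) q (L - j) := by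
    rw [← qPoch_add]; congr 1; omega
  rw [split1] at h₁
  rw [split2] at h₂
  have n1 := left_ne_zero_of_mul h₁
  have n2 := right_ne_zero_of_mul h₁
  have n3 := left_ne_zero_of_mul h₂
  have n4 := right_ne_zero_of_mul h₂
  rw [split1, split2]
  field_simp
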